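/- arXiv:2410.06924 — 4 statements merged into one kernel-verified Lean document; each statement's English description precedes it below -/
import Mathlib

section
/- If X is a Left end in the game tree sense and X is a disintegrator, then Right, moving first, wins the misère game conjugate(1) + X; that is, the Right outcome of {·|0} + X is R. -/
/-- Augmented (misère) game forms: finitely many Left and Right options,
    possibly adorned with a Left and/or Right tombstone marker. -/
inductive Aug : Type
  | mk (m n : ℕ) (L : Fin m → Aug) (R : Fin n → Aug) (tl tr : Bool) : Aug

namespace Aug

def numL : Aug → ℕ
  | mk m _ _ _ _ _ => m

def numR : Aug → ℕ
  | mk _ n _ _ _ _ => n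

def moveL : (G : Aug) → Fin G.numL → Aug
  | mk _ _ L _ _ _ => L

def moveR : (G : Aug) → Fin G.numR → Aug
  | mk _ _ _ R _ _ => R

def tombL : Aug → Bool
  | mk _ _ _ _ t _ => t

def tombR : Aug → Bool
  | mk _ _ _ _ _ t => t

instance : Zero Aug := ⟨mk 0 0 Fin.elim0 Fin.elim0 false false⟩

/-- Disjunctive sum of augmented forms (tombstones propagate to the sum). -/
protected noncomputable def add : Aug → Aug → Aug := by
  intro x
  induction x with
  | mk m n L R tl tr IHL IHR =>
    intro y
    induction y with
    | mk m' n' L' R' tl' tr' IHL' IHR' =>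
      exact mk (m + m') (n + n')
        (Fin.addCases (motive := fun _ => Aug)
          (fun i => IHL i (mk m' n' L' R' tl' tr')) (fun j => IHL' j))
        (Fin.addCases (motive := fun _ => Aug)
          (fun i => IHR i (mk m' n' L' R' tl' tr')) (fun j => IHR' j))
        (tl || tl') (tr || tr')

noncomputable instance : Add Aug := ⟨Aug.add⟩

/-- Conjugate: swap Left and Right throughout. -/
noncomputable def conj : Aug → Aug := by
  intro G
  induction G with
  | mk m n L R tl tr IHL IHR => exact mk n m IHR IHL tr tl

/-- A genuine game form: no tombstones anywhere. -/
def IsGame : Aug → Prop := by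
  intro G
  induction G with
  | mk m n L R tl tr IHL IHR =>
    exact tl = false ∧ tr = false ∧ (∀ i, IHL i) ∧ (∀ j, IHR j)

/-- Formal birthday (tombstones contribute nothing). -/
noncomputable def birthday : Aug → ℕ := by
  intro G
  induction G with
  | mk m n L R _ _ IHL IHR =>
    exact max (Finset.univ.sup fun i => IHL i + 1) (Finset.univ.sup fun j => IHR j + 1)

/-- `winsF G true` : Left, moving first, wins `G` in misère play
    (a Left end-like position is a first-player win for Left).
    `winsF G false` : Right, moving first, wins `G`. -/
def winsF : Aug → Bool → Prop := by
  intro G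
  induction G with
  | mk m n L R tl tr IHL IHR =>
    intro b
    exact match b with
      | true => tl = true ∨ m = 0 ∨ ∃ i, ¬ IHL i false
      | false => tr = true ∨ n = 0 ∨ ∃ j, ¬ IHR j true

/-- Left outcome is `L`. -/
def oL (G : Aug) : Prop := winsF G true

/-- Right outcome is `L` (Left, moving second, wins). -/
def oR (G : Aug) : Prop := ¬ winsF G false

/-- `outcome G ≥ outcome H` in the misère partial order of outcomes
    (Left prefers larger). -/
def outGe (G H : Aug) : Prop := (oL H → oL G) ∧ (oR H → oR G)

/-- `outcome G = outcome H`. -/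
def outEq (G H : Aug) : Prop := (oL G ↔ oL H) ∧ (oR G ↔ oR H)

/-- `G ≥_A H`. -/
def geA (A : Set Aug) (G H : Aug) : Prop := ∀ X ∈ A, outGe (G + X) (H + X)

/-- `G ≡_A H`. -/
def equivA (A : Set Aug) (G H : Aug) : Prop := ∀ X ∈ A, outEq (G + X) (H + X)

def LeftEnd (G : Aug) : Prop := G.numL = 0
def RightEnd (G : Aug) : Prop := G.numR = 0
def LeftEndLike (G : Aug) : Prop := G.tombL = true ∨ G.numL = 0
def RightEndLike (G : Aug) : Prop := G.tombR = true ∨ G.numR = 0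

/-- `G` is Left `A`-strong. -/
def LeftStrong (A : Set Aug) (G : Aug) : Prop :=
  ∀ X ∈ A, LeftEnd X → winsF (G + X) true

/-- `G` is Right `A`-strong. -/
def RightStrong (A : Set Aug) (G : Aug) : Prop :=
  ∀ X ∈ A, RightEnd X → winsF (G + X) false

/-- Hereditarily closed set of games. -/
def Hereditary (A : Set Aug) : Prop :=
  ∀ G ∈ A, (∀ i, G.moveL i ∈ A) ∧ (∀ j, G.moveR j ∈ A)

/-- An (absolute) universe of misère games. -/
structure IsUniverse (U : Set Aug) : Prop where
  games : ∀ G ∈ U, IsGame G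
  zero_mem : (0 : Aug) ∈ U
  add_mem : ∀ G ∈ U, ∀ H ∈ U, G + H ∈ U
  conj_mem : ∀ G ∈ U, conj G ∈ U
  moveL_mem : ∀ G ∈ U, ∀ i, G.moveL i ∈ U
  moveR_mem : ∀ G ∈ U, ∀ j, G.moveR j ∈ U
  dicotic : ∀ (m n : ℕ) (L : Fin m → Aug) (R : Fin n → Aug), 0 < m → 0 < n →
    (∀ i, L i ∈ U) → (∀ j, R j ∈ U) → mk m n L R false false ∈ U

/-- `Û`: the augmented forms admitting a `U`-expansion, i.e. equivalent
    modulo `U` to some member of `U`. -/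
def hatU (U : Set Aug) : Set Aug := {G | ∃ G' ∈ U, equivA U G G'}

/-- `G` is `A`-invertible (with inverse in `A`). -/
def Invertible (A : Set Aug) (G : Aug) : Prop := ∃ H ∈ A, equivA A (G + H) 0

/-- `G` is `U`-invertible with inverse in `Û`. -/
def InvertibleHat (U : Set Aug) (G : Aug) : Prop := ∃ H ∈ hatU U, equivA U (G + H) 0

/-- `G` is conjugate `A`-invertible. -/
def ConjInvertible (A : Set Aug) (G : Aug) : Prop :=
  conj G ∈ A ∧ equivA A (G + conj G) 0

/-- `A` is a monoid of games: a set of games containing `0`, closed under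
    disjunctive sum, on which `≡_A` is a congruence. -/
structure IsMonoidOfGames (A : Set Aug) : Prop where
  games : ∀ G ∈ A, IsGame G
  zero_mem : (0 : Aug) ∈ A
  add_mem : ∀ G ∈ A, ∀ H ∈ A, G + H ∈ A
  congr : ∀ G ∈ A, ∀ H ∈ A, ∀ J ∈ A, equivA A G H → equivA A (G + J) (H + J)

/-- `U`-simplest form: hereditarily, no dominated options, no reversible
    options, and no unnecessary tombstones. -/
def Simplest (U : Set Aug) : Aug → Prop := by
  intro G
  induction G with
  | mk m n L R tl tr IHL IHR =>
    exact
      (∀ i i' : Fin m, geA U (L i) (L i') → i = i') ∧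
      (∀ j j' : Fin n, geA U (R j) (R j') → j = j') ∧
      (∀ i : Fin m, ∀ jj : Fin (L i).numR, ¬ geA U (mk m n L R tl tr) ((L i).moveR jj)) ∧
      (∀ j : Fin n, ∀ ii : Fin (R j).numL, ¬ geA U ((R j).moveL ii) (mk m n L R tl tr)) ∧
      (tl = true → ¬ equivA U (mk m n L R tl tr) (mk m n L R false tr)) ∧
      (tr = true → ¬ equivA U (mk m n L R tl tr) (mk m n L R tl false)) ∧
      (∀ i, IHL i) ∧ (∀ j, IHR j)

lemma birthday_mk (m n : ℕ) (L : Fin m → Aug) (R : Fin n → Aug) (tl tr : Bool) :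
    birthday (mk m n L R tl tr) =
      max (Finset.univ.sup fun i => birthday (L i) + 1)
          (Finset.univ.sup fun j => birthday (R j) + 1) := rfl

lemma birthday_moveL_lt : ∀ (G : Aug) (i : Fin G.numL), birthday (G.moveL i) < birthday G := by
  intro G
  cases G with
  | mk m n L R tl tr =>
    intro i
    show birthday (L i) < birthday (mk m n L R tl tr)
    rw [birthday_mk]
    have h1 : birthday (L i) + 1 ≤ Finset.univ.sup (fun i => birthday (L i) + 1) :=
      Finset.le_sup (f := fun i => birthday (L i) + 1) (Finset.mem_univ i)
    exact lt_of_lt_of_le (Nat.lt_succ_self _) (h1.trans (le_max_left _ _))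

lemma birthday_moveR_lt : ∀ (G : Aug) (j : Fin G.numR), birthday (G.moveR j) < birthday G := by
  intro G
  cases G with
  | mk m n L R tl tr =>
    intro j
    show birthday (R j) < birthday (mk m n L R tl tr)
    rw [birthday_mk]
    have h1 : birthday (R j) + 1 ≤ Finset.univ.sup (fun j => birthday (R j) + 1) :=
      Finset.le_sup (f := fun j => birthday (R j) + 1) (Finset.mem_univ j)
    exact lt_of_lt_of_le (Nat.lt_succ_self _) (h1.trans (le_max_right _ _))

/-- A disintegrator. -/
def Disintegrator (G : Aug) : Prop :=
  ∃ j : Fin G.numR, (G.moveR j).numL ≠ 0 ∧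
    ∀ i : Fin (G.moveR j).numL,
      ¬ winsF ((G.moveR j).moveL i) true ∨ Disintegrator ((G.moveR j).moveL i)
termination_by birthday G
decreasing_by exact lt_trans (birthday_moveL_lt _ _) (birthday_moveR_lt _ _)

/-- A starkiller. -/
def Starkiller (G : Aug) : Prop :=
  ∃ j : Fin G.numR, winsF (G.moveR j) false ∧
    ∀ i : Fin (G.moveR j).numL,
      ¬ winsF ((G.moveR j).moveL i) true ∨ Starkiller ((G.moveR j).moveL i)
termination_by birthday G
decreasing_by exact lt_trans (birthday_moveL_lt _ _) (birthday_moveR_lt _ _)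

def one : Aug := mk 1 0 (fun _ => 0) Fin.elim0 false false
def two : Aug := mk 1 0 (fun _ => one) Fin.elim0 false false
def star : Aug := mk 1 1 (fun _ => 0) (fun _ => 0) false false
/-- `conjugate(1) = {·|0}`. -/
def oneConj : Aug := mk 0 1 Fin.elim0 (fun _ => 0) false false
/-- `{·|2}`. -/
def endTwo : Aug := mk 0 1 Fin.elim0 (fun _ => two) false false

/-- `n` copies of `G` summed. -/
noncomputable def nCopies : ℕ → Aug → Aug
  | 0, _ => 0
  | n + 1, G => nCopies n G + G

/-- Dicot: every subposition has both or neither kind of option. -/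
def Dicot : Aug → Prop := by
  intro G
  induction G with
  | mk m n L R _ _ IHL IHR => exact (m = 0 ↔ n = 0) ∧ (∀ i, IHL i) ∧ (∀ j, IHR j)

/-- Hereditarily a Left end. -/
def LeftEndHered : Aug → Prop := by
  intro G
  induction G with
  | mk m n L R _ _ IHL IHR => exact m = 0 ∧ (∀ j, IHR j)

/-- Hereditarily a Right end. -/
def RightEndHered : Aug → Prop := by
  intro G
  induction G with
  | mk m n L R _ _ IHL IHR => exact n = 0 ∧ (∀ i, IHL i)

/-- Dead-ending: once a player has no move in a subposition, that player
    never again has a move. -/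
def DeadEnding : Aug → Prop := by
  intro G
  induction G with
  | mk m n L R tl tr IHL IHR =>
    exact (m = 0 → LeftEndHered (mk m n L R tl tr)) ∧
      (n = 0 → RightEndHered (mk m n L R tl tr)) ∧
      (∀ i, IHL i) ∧ (∀ j, IHR j)

/-- Left weak set of games. -/
def LeftWeak (A : Set Aug) : Prop := ∀ G : Aug, LeftStrong A G ↔ LeftEndLike G

/-- Right weak set of games. -/
def RightWeak (A : Set Aug) : Prop := ∀ G : Aug, RightStrong A G ↔ RightEndLike G

end Aug
namespace Aug

lemma mk_cast {m m' n n' : ℕ} (hm : m = m') (hn : n = n')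
    {L : Fin m → Aug} {L' : Fin m' → Aug} {R : Fin n → Aug} {R' : Fin n' → Aug}
    {tl tr : Bool}
    (hL : ∀ i : Fin m, L i = L' (Fin.cast hm i))
    (hR : ∀ j : Fin n, R j = R' (Fin.cast hn j)) :
    mk m n L R tl tr = mk m' n' L' R' tl tr := by
  subst hm; subst hn
  have h1 : L = L' := funext fun i => hL i
  have h2 : R = R' := funext fun j => hR j
  rw [h1, h2]

lemma zero_add' : ∀ G : Aug, (0 : Aug) + G = G := by
  intro G
  induction G with
  | mk m n L R tl tr IHL IHR =>
    show mk (0 + m) (0 + n) _ _ (false || tl) (false || tr) = mk m n L R tl tr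
    simp only [Bool.false_or]
    refine mk_cast (Nat.zero_add m) (Nat.zero_add n) (fun i => ?_) (fun j => ?_)
    · have h : i = Fin.natAdd 0 (Fin.cast (Nat.zero_add m) i) := by
        apply Fin.ext; simp
      rw [h, Fin.addCases_right]
      refine (IHL (Fin.cast (Nat.zero_add m) i)).trans ?_
      congr 1
      apply Fin.ext; simp
    · have h : j = Fin.natAdd 0 (Fin.cast (Nat.zero_add n) j) := by
        apply Fin.ext; simp
      rw [h, Fin.addCases_right]
      refine (IHR (Fin.cast (Nat.zero_add n) j)).trans ?_
      congr 1
      apply Fin.ext; simp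
end Aug

namespace Aug

lemma right_wins_oneConj_add (Z : Aug) (h : ¬ winsF Z true) : winsF (oneConj + Z) false := by
  cases Z with
  | mk p q P Q fl fr =>
    show fr = true ∨ 1 + q = 0 ∨ ∃ k : Fin (1 + q),
      ¬ winsF ((Fin.addCases (fun _ : Fin 1 => (0 : Aug) + mk p q P Q fl fr)
        (fun j => oneConj + Q j) : Fin (1 + q) → Aug) k) true
    refine Or.inr (Or.inr ⟨Fin.castAdd q ⟨0, Nat.one_pos⟩, ?_⟩)
    have e : (Fin.addCases (fun _ : Fin 1 => (0 : Aug) + mk p q P Q fl fr)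
        (fun j => oneConj + Q j) : Fin (1 + q) → Aug) (Fin.castAdd q ⟨0, Nat.one_pos⟩)
        = (0 : Aug) + mk p q P Q fl fr := Fin.addCases_left _
    rw [e, zero_add']
    exact h

lemma main_lemma : ∀ (N : ℕ) (X : Aug), birthday X ≤ N → IsGame X → Disintegrator X →
    winsF (oneConj + X) false := by
  intro N
  induction N with
  | zero =>
    intro X hb hg hd
    rw [Disintegrator] at hd
    obtain ⟨j, -, -⟩ := hd
    have h1 := birthday_moveR_lt X j
    omega
  | succ N IH =>
    intro X hb hg hd
    cases X with
    | mk m n L R tl tr =>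
      obtain ⟨htl, htr, hLg, hRg⟩ : tl = false ∧ tr = false ∧ (∀ i, IsGame (L i)) ∧
        (∀ j, IsGame (R j)) := hg
      subst htl; subst htr
      rw [Disintegrator] at hd
      obtain ⟨j, hne, hopt⟩ := hd
      have hne' : (R j).numL ≠ 0 := hne
      have hopt' : ∀ i : Fin (R j).numL,
          ¬ winsF ((R j).moveL i) true ∨ Disintegrator ((R j).moveL i) := hopt
      have hb2 : birthday (R j) ≤ N := by
        have h3 : birthday (R j) < birthday (mk m n L R false false) :=
          birthday_moveR_lt (mk m n L R false false) j
        omega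
      show false = true ∨ 1 + n = 0 ∨ ∃ k : Fin (1 + n),
        ¬ winsF ((Fin.addCases (fun _ : Fin 1 => (0 : Aug) + mk m n L R false false)
          (fun j => oneConj + R j) : Fin (1 + n) → Aug) k) true
      refine Or.inr (Or.inr ⟨Fin.natAdd 1 j, ?_⟩)
      have e : (Fin.addCases (fun _ : Fin 1 => (0 : Aug) + mk m n L R false false)
          (fun j => oneConj + R j) : Fin (1 + n) → Aug) (Fin.natAdd 1 j)
          = oneConj + R j := Fin.addCases_right _
      rw [e]
      -- now: ¬ winsF (oneConj + R j) true
      have hYg : IsGame (R j) := hRg j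
      have hbP' : ∀ i : Fin (R j).numL, birthday ((R j).moveL i) < birthday (R j) :=
        birthday_moveL_lt (R j)
      rcases hRj : R j with ⟨p, q, P, Q, fl, fr⟩
      rw [hRj] at hne' hopt' hb2 hYg hbP'
      obtain ⟨hfl, hfr, hPg, hQg⟩ : fl = false ∧ fr = false ∧ (∀ i, IsGame (P i)) ∧
        (∀ j, IsGame (Q j)) := hYg
      subst hfl; subst hfr
      have hp : p ≠ 0 := hne'
      intro hw
      have hw' : false = true ∨ 0 + p = 0 ∨ ∃ i : Fin (0 + p),
          ¬ winsF ((Fin.addCases (fun i : Fin 0 => (Fin.elim0 i : Aug) + mk p q P Q false false)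
            (fun i => oneConj + P i) : Fin (0 + p) → Aug) i) false := hw
      rcases hw' with h | h | ⟨i, hi⟩
      · exact absurd h (by simp)
      · omega
      · set i' : Fin p := Fin.cast (Nat.zero_add p) i with hi'def
        have e2 : (Fin.addCases (fun i : Fin 0 => (Fin.elim0 i : Aug) + mk p q P Q false false)
            (fun i => oneConj + P i) : Fin (0 + p) → Aug) i = oneConj + P i' := by
          have hieq : i = Fin.natAdd 0 i' := by apply Fin.ext; simp [hi'def]
          rw [hieq]; exact Fin.addCases_right i'
        rw [e2] at hi
        apply hi
        have hopt'' : ¬ winsF (P i') true ∨ Disintegrator (P i') := hopt' i'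
        rcases hopt'' with hlose | hdis
        · exact right_wins_oneConj_add (P i') hlose
        · have hbP : birthday (P i') ≤ N := by
            have h4 : birthday (P i') < birthday (mk p q P Q false false) := hbP' i'
            have h5 : birthday (mk p q P Q false false) ≤ N := hb2
            omega
          exact IH (P i') hbP (hPg i') hdis

end Aug

/-- if `X` is a Left end that is a disintegrator, then Right,
moving first, wins `{·|0} + X`. -/
theorem stmt11 (X : Aug) (hX : Aug.IsGame X) (hend : Aug.LeftEnd X)
    (hd : Aug.Disintegrator X) :
    Aug.winsF (Aug.oneConj + X) false :=
  Aug.main_lemma (Aug.birthday X) X le_rfl hX hd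
end

section
/- If X is a game whose Left outcome is L (Left moving first wins in misère play) and X is not a disintegrator, then Left, moving second, wins conjugate(1) + X; that is, the Right outcome of {·|0} + X is L. -/
namespace Aug

lemma add_mk (m n m' n' : ℕ) (L : Fin m → Aug) (R : Fin n → Aug)
    (L' : Fin m' → Aug) (R' : Fin n' → Aug) (tl tr tl' tr' : Bool) :
    (mk m n L R tl tr) + (mk m' n' L' R' tl' tr') =
      mk (m + m') (n + n')
        (Fin.addCases (fun i => L i + mk m' n' L' R' tl' tr') (fun j => mk m n L R tl tr + L' j))
        (Fin.addCases (fun i => R i + mk m' n' L' R' tl' tr') (fun j => mk m n L R tl tr + R' j))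
        (tl || tl') (tr || tr') := rfl

lemma winsF_mk_true (m n : ℕ) (L : Fin m → Aug) (R : Fin n → Aug) (tl tr : Bool) :
    winsF (mk m n L R tl tr) true ↔ (tl = true ∨ m = 0 ∨ ∃ i, ¬ winsF (L i) false) := Iff.rfl

lemma winsF_mk_false (m n : ℕ) (L : Fin m → Aug) (R : Fin n → Aug) (tl tr : Bool) :
    winsF (mk m n L R tl tr) false ↔ (tr = true ∨ n = 0 ∨ ∃ j, ¬ winsF (R j) true) := Iff.rfl

lemma natAdd_zero_cast {n : ℕ} (j : Fin (0 + n)) :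
    Fin.natAdd 0 (Fin.cast (Nat.zero_add n) j) = j := by
  ext; simp [Fin.natAdd]

lemma winsF_zero_add : ∀ (X : Aug) (b : Bool), winsF ((0:Aug) + X) b ↔ winsF X b := by
  intro X
  induction X with
  | mk m n L R tl tr IHL IHR =>
    intro b
    rw [show (0:Aug) = mk 0 0 Fin.elim0 Fin.elim0 false false from rfl, add_mk]
    cases b
    · rw [winsF_mk_false, winsF_mk_false]
      constructor
      · rintro (h | h | ⟨j, hj⟩)
        · exact Or.inl h
        · exact Or.inr (Or.inl (by omega))
        · refine Or.inr (Or.inr ?_)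
          rw [← natAdd_zero_cast j, Fin.addCases_right] at hj
          exact ⟨_, fun h => hj ((IHR _ true).mpr h)⟩
      · rintro (h | h | ⟨j, hj⟩)
        · exact Or.inl h
        · exact Or.inr (Or.inl (by omega))
        · refine Or.inr (Or.inr ⟨Fin.natAdd 0 j, ?_⟩)
          rw [Fin.addCases_right]
          exact fun h => hj ((IHR j true).mp h)
    · rw [winsF_mk_true, winsF_mk_true]
      constructor
      · rintro (h | h | ⟨i, hi⟩)
        · exact Or.inl h
        · exact Or.inr (Or.inl (by omega))
        · refine Or.inr (Or.inr ?_)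
          rw [← natAdd_zero_cast i, Fin.addCases_right] at hi
          exact ⟨_, fun h => hi ((IHL _ false).mpr h)⟩
      · rintro (h | h | ⟨i, hi⟩)
        · exact Or.inl h
        · exact Or.inr (Or.inl (by omega))
        · refine Or.inr (Or.inr ⟨Fin.natAdd 0 i, ?_⟩)
          rw [Fin.addCases_right]
          exact fun h => hi ((IHL i false).mp h)

lemma stmt12_main : ∀ (N : ℕ) (X : Aug), birthday X < N → IsGame X → winsF X true →
    ¬ Disintegrator X → ¬ winsF (oneConj + X) false := by
  intro N
  induction N with
  | zero => intro X h; exact absurd h (Nat.not_lt_zero _)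
  | succ N IH =>
    intro X hb hG hL hd
    cases X with
    | mk m n L R tl tr =>
      obtain ⟨htl, htr, hGL, hGR⟩ := hG
      rw [Disintegrator.eq_1] at hd
      push_neg at hd
      rw [show oneConj = mk 0 1 Fin.elim0 (fun _ => (0:Aug)) false false from rfl, add_mk,
        winsF_mk_false]
      push_neg
      refine ⟨by simp [htr], by omega, ?_⟩
      intro j
      induction j using Fin.addCases with
      | left i =>
        rw [Fin.addCases_left]
        exact (winsF_zero_add _ _).mpr hL
      | right j =>
        rw [Fin.addCases_right]
        have hg2 : IsGame (R j) := hGR j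
        have hd2 : (R j).numL ≠ 0 → ∃ i : Fin (R j).numL,
            winsF ((R j).moveL i) true ∧ ¬ Disintegrator ((R j).moveL i) := hd j
        have hbj : birthday (R j) < birthday (mk m n L R tl tr) :=
          birthday_moveR_lt (mk m n L R tl tr) j
        cases h2 : R j with
        | mk m2 n2 L2 R2 tl2 tr2 =>
          rw [h2] at hg2 hd2 hbj
          simp only [numL, moveL] at hd2
          obtain ⟨htl2, htr2, hgL2, hgR2⟩ := hg2
          rw [add_mk, winsF_mk_true]
          by_cases hm2 : m2 = 0
          · exact Or.inr (Or.inl (by omega))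
          · obtain ⟨i, hw, hnd⟩ := hd2 hm2
            refine Or.inr (Or.inr ⟨Fin.natAdd 0 i, ?_⟩)
            rw [Fin.addCases_right]
            have hblt : birthday (L2 i) < N := by
              have h3 := birthday_moveL_lt (mk m2 n2 L2 R2 tl2 tr2) i
              simp only [moveL] at h3
              omega
            exact IH (L2 i) hblt (hgL2 i) hw hnd


end Aug

/-- if `X` has Left outcome `L` and is not a disintegrator, then
Left, moving second, wins `{·|0} + X`. -/
theorem stmt12 (X : Aug) (hX : Aug.IsGame X) (hL : Aug.winsF X true)
    (hd : ¬ Aug.Disintegrator X) :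
    ¬ Aug.winsF (Aug.oneConj + X) false :=
  Aug.stmt12_main (Aug.birthday X + 1) X (Nat.lt_succ_self _) hX hL hd
end

section
/- If X is a starkiller, then Right, moving first, wins the misère game * + X; that is, the Right outcome of {0|0} + X is R. -/
namespace Aug
lemma add_eq (m n : ℕ) (L : Fin m → Aug) (R : Fin n → Aug) (tl tr : Bool)
    (m' n' : ℕ) (L' : Fin m' → Aug) (R' : Fin n' → Aug) (tl' tr' : Bool) :
    (mk m n L R tl tr) + (mk m' n' L' R' tl' tr') =
    mk (m+m') (n+n')
      (Fin.addCases (fun i => L i + mk m' n' L' R' tl' tr') (fun j => mk m n L R tl tr + L' j))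
      (Fin.addCases (fun i => R i + mk m' n' L' R' tl' tr') (fun j => mk m n L R tl tr + R' j))
      (tl || tl') (tr || tr') := rfl

lemma winsF_mk (m n : ℕ) (L : Fin m → Aug) (R : Fin n → Aug) (tl tr : Bool) (b : Bool) :
    winsF (mk m n L R tl tr) b ↔ (match b with
      | true => tl = true ∨ m = 0 ∨ ∃ i, ¬ winsF (L i) false
      | false => tr = true ∨ n = 0 ∨ ∃ j, ¬ winsF (R j) true) := Iff.rfl

lemma addCases_lt {α : Sort*} {m n : ℕ} (f : Fin m → α) (g : Fin n → α) (i : Fin (m+n)) (h : i.val < m) :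
    Fin.addCases (motive := fun _ => α) f g i = f ⟨i.val, h⟩ := by
  simp only [Fin.addCases, h, dif_pos, eq_rec_constant]
  rfl

lemma addCases_ge {α : Sort*} {m n : ℕ} (f : Fin m → α) (g : Fin n → α) (i : Fin (m+n)) (h : m ≤ i.val) :
    Fin.addCases (motive := fun _ => α) f g i = g ⟨i.val - m, by omega⟩ := by
  simp only [Fin.addCases, Nat.not_lt.mpr h, dif_neg, eq_rec_constant]
  congr

lemma zero_add_winsF : ∀ (G : Aug) (b : Bool), winsF ((0:Aug) + G) b ↔ winsF G b := by
  intro G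
  induction G with
  | mk m n L R tl tr IHL IHR =>
    intro b
    show winsF (mk 0 0 Fin.elim0 Fin.elim0 false false + mk m n L R tl tr) b ↔ _
    rw [add_eq, winsF_mk, winsF_mk]
    cases b <;> simp only [Bool.false_or]
    · constructor
      · rintro (h | h | ⟨j, hj⟩)
        · exact Or.inl h
        · exact Or.inr (Or.inl (by omega))
        · rw [addCases_ge _ _ j (by omega)] at hj
          exact Or.inr (Or.inr ⟨_, fun hw => hj ((IHR _ _).mpr hw)⟩)
      · rintro (h | h | ⟨j, hj⟩)
        · exact Or.inl h
        · exact Or.inr (Or.inl (by omega))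
        · refine Or.inr (Or.inr ⟨⟨j.val, by omega⟩, ?_⟩)
          rw [addCases_ge _ _ _ (by omega)]
          intro hw
          exact hj (by simpa using (IHR _ _).mp hw)
    · constructor
      · rintro (h | h | ⟨i, hi⟩)
        · exact Or.inl h
        · exact Or.inr (Or.inl (by omega))
        · rw [addCases_ge _ _ i (by omega)] at hi
          exact Or.inr (Or.inr ⟨_, fun hw => hi ((IHL _ _).mpr hw)⟩)
      · rintro (h | h | ⟨i, hi⟩)
        · exact Or.inl h
        · exact Or.inr (Or.inl (by omega))
        · refine Or.inr (Or.inr ⟨⟨i.val, by omega⟩, ?_⟩)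
          rw [addCases_ge _ _ _ (by omega)]
          intro hw
          exact hi (by simpa using (IHL _ _).mp hw)
end Aug
namespace Aug
lemma isGame_mk {m n : ℕ} {L : Fin m → Aug} {R : Fin n → Aug} {tl tr : Bool}
    (h : IsGame (mk m n L R tl tr)) :
    tl = false ∧ tr = false ∧ (∀ i, IsGame (L i)) ∧ (∀ j, IsGame (R j)) := h

lemma star_eq : star = mk 1 1 (fun _ => (0:Aug)) (fun _ => (0:Aug)) false false := rfl

lemma winsF_star_add_false_of_not (G : Aug) (h : ¬ winsF G true) : winsF (star + G) false := by
  cases G with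
  | mk m n L R tl tr =>
    rw [star_eq, add_eq, winsF_mk]
    refine Or.inr (Or.inr ⟨⟨0, by omega⟩, ?_⟩)
    rw [addCases_lt _ _ _ (by norm_num : (0:ℕ) < 1)]
    intro hw
    exact h ((zero_add_winsF _ _).mp hw)

lemma key : ∀ (k : ℕ) (X : Aug), birthday X ≤ k → IsGame X → Starkiller X →
    winsF (star + X) false := by
  intro k
  induction k with
  | zero =>
    intro X hb _ hS
    rw [Starkiller] at hS
    obtain ⟨j, _, _⟩ := hS
    have := birthday_moveR_lt X j
    omega
  | succ k IH =>
    intro X hb hG hS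
    cases X with
    | mk m n L R tl tr =>
      rw [Starkiller] at hS
      simp only [numR, moveR, numL, moveL] at hS
      obtain ⟨j, hR, hopt⟩ := hS
      obtain ⟨htl, htr, hGL, hGR⟩ := isGame_mk hG
      rw [star_eq, add_eq, winsF_mk]
      refine Or.inr (Or.inr ⟨⟨1 + j.val, by omega⟩, ?_⟩)
      rw [addCases_ge _ _ _ (by omega : 1 ≤ 1 + j.val)]
      have hjj : (⟨1 + j.val - 1, by omega⟩ : Fin n) = j := by ext; simp
      rw [hjj]
      have hbY : birthday (R j) ≤ k := by
        have h1 := birthday_moveR_lt (mk m n L R tl tr) j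
        simp only [numR, moveR] at h1
        omega
      have hGY : IsGame (R j) := hGR j
      rcases hy : R j with ⟨m', n', L', R', tl', tr'⟩
      rw [hy] at hR hGY hbY hopt
      simp only [numL, moveL] at hopt
      obtain ⟨htl', htr', hGL', hGR'⟩ := isGame_mk hGY
      subst htl' htr'
      rw [add_eq, winsF_mk]
      rintro (h | h | ⟨i, hi⟩)
      · simp at h
      · omega
      · rcases Nat.lt_or_ge i.val 1 with hlt | hge
        · rw [addCases_lt _ _ _ hlt] at hi
          exact hi ((zero_add_winsF _ _).mpr hR)
        · rw [addCases_ge _ _ _ hge] at hi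
          rcases hopt ⟨i.val - 1, by have := i.isLt; omega⟩ with hnw | hsk
          · exact hi (winsF_star_add_false_of_not _ hnw)
          · refine hi ?_
            have hbZ : birthday (L' ⟨i.val - 1, by omega⟩) ≤ k := by
              have h1 := birthday_moveL_lt (mk m' n' L' R' false false)
                ⟨i.val - 1, show i.val - 1 < m' by have := i.isLt; omega⟩
              simp only [numL, moveL] at h1
              omega
            exact IH _ hbZ (hGL' _) hsk
end Aug

/-- if `X` is a starkiller, then Right, moving first, wins
`* + X`. -/
theorem stmt14 (X : Aug) (hX : Aug.IsGame X) (h : Aug.Starkiller X) :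
    Aug.winsF (Aug.star + X) false := Aug.key (Aug.birthday X) X le_rfl hX h
end

section
/- If A is a Left weak monoid of games, then every A-invertible element of A is a Left end. Consequently, if A is weak (both Left and Right weak), then A is reduced: 0 is its only invertible element up to equivalence. -/
namespace Aug

lemma numL_add (G H : Aug) : (G + H).numL = G.numL + H.numL := by
  cases G; cases H; rfl

lemma numR_add (G H : Aug) : (G + H).numR = G.numR + H.numR := by
  cases G; cases H; rfl

lemma tombL_add (G H : Aug) : (G + H).tombL = (G.tombL || H.tombL) := by
  cases G; cases H; rfl

lemma tombR_add (G H : Aug) : (G + H).tombR = (G.tombR || H.tombR) := by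
  cases G; cases H; rfl

lemma winsF_of_numL_eq_zero (G : Aug) (h : G.numL = 0) : winsF G true := by
  cases G with
  | mk m n L R tl tr => exact Or.inr (Or.inl h)

lemma winsF_of_numR_eq_zero (G : Aug) (h : G.numR = 0) : winsF G false := by
  cases G with
  | mk m n L R tl tr => exact Or.inr (Or.inl h)

lemma tombL_eq_false_of_isGame (G : Aug) (h : IsGame G) : G.tombL = false := by
  cases G with
  | mk m n L R tl tr => exact h.1

lemma tombR_eq_false_of_isGame (G : Aug) (h : IsGame G) : G.tombR = false := by
  cases G with
  | mk m n L R tl tr => exact h.2.1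

lemma eq_zero_of_ends (G : Aug) (hg : IsGame G) (h1 : G.numL = 0) (h2 : G.numR = 0) :
    G = 0 := by
  cases G with
  | mk m n L R tl tr =>
    obtain ⟨htl, htr, -, -⟩ := hg
    subst htl htr
    simp only [numL, numR] at h1 h2
    subst h1 h2
    show mk 0 0 L R false false = mk 0 0 Fin.elim0 Fin.elim0 false false
    congr 1 <;> funext i <;> exact i.elim0

end Aug

/-- in a Left weak monoid of games every invertible element is a
Left end; a weak monoid of games is reduced. -/
theorem stmt18 (A : Set Aug) (hA : Aug.IsMonoidOfGames A) (hweak : Aug.LeftWeak A) :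
    (∀ G ∈ A, Aug.Invertible A G → Aug.LeftEnd G) ∧
    (Aug.RightWeak A → ∀ G ∈ A, Aug.Invertible A G → Aug.equivA A G 0) := by
  have coreL : ∀ G ∈ A, ∀ H ∈ A, Aug.equivA A (G + H) 0 → (G + H).numL = 0 := by
    intro G hG H hH hequiv
    have hstrong : Aug.LeftStrong A (G + H) := by
      intro X hX hXend
      have h0 : Aug.oL ((0 : Aug) + X) := by
        apply Aug.winsF_of_numL_eq_zero
        rw [Aug.numL_add]
        have hx : X.numL = 0 := hXend
        have h0 : Aug.numL 0 = 0 := rfl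
        omega
      exact ((hequiv X hX).1).mpr h0
    have hEL : Aug.LeftEndLike (G + H) := (hweak (G + H)).mp hstrong
    rcases hEL with ht | hn
    · exfalso
      rw [Aug.tombL_add, Aug.tombL_eq_false_of_isGame G (hA.games G hG),
        Aug.tombL_eq_false_of_isGame H (hA.games H hH)] at ht
      simp at ht
    · exact hn
  constructor
  · intro G hG ⟨H, hH, hequiv⟩
    have := coreL G hG H hH hequiv
    rw [Aug.numL_add] at this
    exact Nat.eq_zero_of_add_eq_zero_right this
  · intro hweakR G hG ⟨H, hH, hequiv⟩
    have hL := coreL G hG H hH hequiv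
    have hR : (G + H).numR = 0 := by
      have hstrong : Aug.RightStrong A (G + H) := by
        intro X hX hXend
        have h0 : ¬ Aug.oR ((0 : Aug) + X) := by
          intro h
          apply h
          apply Aug.winsF_of_numR_eq_zero
          rw [Aug.numR_add]
          have hx : X.numR = 0 := hXend
          have h0 : Aug.numR 0 = 0 := rfl
          omega
        by_contra hw
        exact h0 (((hequiv X hX).2).mp hw)
      have hEL : Aug.RightEndLike (G + H) := (hweakR (G + H)).mp hstrong
      rcases hEL with ht | hn
      · exfalso
        rw [Aug.tombR_add, Aug.tombR_eq_false_of_isGame G (hA.games G hG),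
          Aug.tombR_eq_false_of_isGame H (hA.games H hH)] at ht
        simp at ht
      · exact hn
    rw [Aug.numL_add] at hL
    rw [Aug.numR_add] at hR
    have hGeq : G = 0 := Aug.eq_zero_of_ends G (hA.games G hG)
      (Nat.eq_zero_of_add_eq_zero_right hL) (Nat.eq_zero_of_add_eq_zero_right hR)
    subst hGeq
    intro X hX
    exact ⟨Iff.rfl, Iff.rfl⟩
end
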